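/- arXiv:2407.06398 — 2 statements merged into one kernel-verified Lean document; each statement's English description precedes it below -/
import Mathlib

section
/- Let μ be the uniform probability measure on [0,1] and let k ≥ 1. Then inf_{y ∈ ℝᵏ} ∫_0^1 min_{1≤j≤k} |x − y_j| dx = 1/(4k), and the infimum is attained at y_j = (2j−1)/(2k) for j = 1,…,k. Equivalently, inf_{ν ∈ 𝒫_k(ℝ)} W₁(μ, ν) = 1/(4k), attained by ν = (1/k) ∑_{j=1}^k δ_{(2j−1)/(2k)}. -/
open MeasureTheory Filter Topology ENNReal

/-- The 1-Wasserstein distance between two measures on ℝ, defined as the infimum of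
transport costs over couplings. -/
noncomputable def W1 (α β : Measure ℝ) : ℝ :=
  sInf {c : ℝ | ∃ π : Measure (ℝ × ℝ), IsProbabilityMeasure π ∧
    π.map Prod.fst = α ∧ π.map Prod.snd = β ∧ c = ∫ p, |p.1 - p.2| ∂π}

/-- The ∞-Wasserstein distance between two measures on ℝ. -/
noncomputable def Winf (α β : Measure ℝ) : ℝ :=
  sInf {c : ℝ | ∃ π : Measure (ℝ × ℝ), IsProbabilityMeasure π ∧
    π.map Prod.fst = α ∧ π.map Prod.snd = β ∧
    c = essSup (fun p : ℝ × ℝ => |p.1 - p.2|) π}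

/-- `Pk k` : probability measures on ℝ supported on at most `k` points. -/
def Pk (k : ℕ) : Set (Measure ℝ) :=
  {ν | IsProbabilityMeasure ν ∧ ∃ s : Finset ℝ, s.card ≤ k ∧ ν ((↑s : Set ℝ)ᶜ) = 0}

/-- Wasserstein projection distance of `μ` onto `k`-point measures. -/
noncomputable def projDist (k : ℕ) (μ : Measure ℝ) : ℝ :=
  sInf {c : ℝ | ∃ ν ∈ Pk k, c = W1 μ ν}

/-- Empirical measure of a tuple of points. -/
noncomputable def empMeas {n : ℕ} (x : Fin n → ℝ) : Measure ℝ :=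
  ((n : ℝ≥0∞))⁻¹ • ∑ i : Fin n, Measure.dirac (x i)

/-- Social cost of facility placement `y` for agents at `x`. -/
noncomputable def SC {n k : ℕ} (x : Fin n → ℝ) (y : Fin k → ℝ) : ℝ :=
  (n : ℝ)⁻¹ * ∑ i : Fin n, ⨅ j : Fin k, |x i - y j|

/-- Optimal social cost for `k` facilities. -/
noncomputable def SCopt (k : ℕ) {n : ℕ} (x : Fin n → ℝ) : ℝ :=
  ⨅ y : Fin k → ℝ, SC x y

/-- Topological support of a measure on ℝ. -/
def msupport (ν : Measure ℝ) : Set ℝ := {t : ℝ | ∀ U ∈ nhds t, ν U ≠ 0}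

/-- Cumulative distribution function of a measure on ℝ. -/
noncomputable def mcdf (μ : Measure ℝ) (t : ℝ) : ℝ := (μ (Set.Iic t)).toReal

/-- Quantile (generalized inverse c.d.f.) of a measure on ℝ. -/
noncomputable def mquantile (μ : Measure ℝ) (v : ℝ) : ℝ := sInf {t : ℝ | v ≤ mcdf μ t}

/-- Basic assumptions: `μ` is an absolutely continuous probability measure with density `ρ`,
supported on a (closed) interval `S`, with `ρ` positive on the interior of `S`, vanishing
outside `S`, and differentiable on `S`. -/
def BasicAssumptions (μ : Measure ℝ) : Prop :=
  IsProbabilityMeasure μ ∧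
  ∃ (ρ : ℝ → ℝ) (S : Set ℝ),
    μ = volume.withDensity (fun x => ENNReal.ofReal (ρ x)) ∧
    IsClosed S ∧ S.OrdConnected ∧ μ Sᶜ = 0 ∧
    (∀ x ∈ interior S, 0 < ρ x) ∧ (∀ x ∉ S, ρ x = 0) ∧
    DifferentiableOn ℝ ρ S

/-- The percentile mechanism: facility `j` is placed at the `(⌊(n-1)vⱼ⌋+1)`-th smallest
coordinate of `x`. -/
noncomputable def percentileMech {k : ℕ} (v : Fin k → ℝ) {n : ℕ} (x : Fin n → ℝ) :
    Fin k → ℝ :=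
  fun j =>
    if h : 0 < n then
      x (Tuple.sort x ⟨min ⌊((n : ℝ) - 1) * v j⌋₊ (n - 1),
        Nat.lt_of_le_of_lt (min_le_right _ _) (by omega)⟩)
    else 0

/-- Social cost of the percentile mechanism with percentile vector `v`. -/
noncomputable def SCv {k : ℕ} (v : Fin k → ℝ) {n : ℕ} (x : Fin n → ℝ) : ℝ :=
  SC x (percentileMech v x)

/-- Cumulative masses of the Voronoi cells of the points `y 0 < y 1 < ⋯ < y (k-1)`:
`cellBd μ y j = F_μ(z_j)` where `z_j = (y (j-1) + y j)/2` for `1 ≤ j ≤ k-1` (1-based),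
with the conventions `F_μ(z_0) = 0` and `F_μ(z_k) = 1`. -/
noncomputable def cellBd (μ : Measure ℝ) {k : ℕ} (y : Fin k → ℝ) (j : ℕ) : ℝ :=
  if h0 : j = 0 then 0
  else if hk : k ≤ j then 1
  else mcdf μ ((y ⟨j - 1, by omega⟩ + y ⟨j, by omega⟩) / 2)

/-- The measure `ν_{Q_v}`: atoms at the quantiles `F_μ^{[-1]}(vⱼ)` weighted by the masses of
their Voronoi cells. -/
noncomputable def nuQ (μ : Measure ℝ) {k : ℕ} (v : Fin k → ℝ) : Measure ℝ :=
  ∑ i : Fin k,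
    ENNReal.ofReal (cellBd μ (fun j => mquantile μ (v j)) ((i : ℕ) + 1) -
        cellBd μ (fun j => mquantile μ (v j)) (i : ℕ)) •
      Measure.dirac (mquantile μ (v i))

variable {k : ℕ}

lemma fin_nonempty (hk : 1 ≤ k) : Nonempty (Fin k) := ⟨⟨0, hk⟩⟩

lemma continuous_fmin (hk : 1 ≤ k) (y : Fin k → ℝ) :
    Continuous fun x : ℝ => ⨅ j : Fin k, |x - y j| := by
  haveI := fin_nonempty hk
  have h : (fun x : ℝ => ⨅ j : Fin k, |x - y j|)
      = fun x : ℝ => Finset.univ.inf' Finset.univ_nonempty (fun j => |x - y j|) := by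
    funext x; rw [Finset.inf'_univ_eq_ciInf]
  rw [h]
  exact Continuous.finset_inf'_apply (f := fun (j : Fin k) (x : ℝ) => |x - y j|) Finset.univ_nonempty
    (fun i _ => (continuous_id.sub continuous_const).abs)

lemma fmin_nonneg (hk : 1 ≤ k) (y : Fin k → ℝ) (x : ℝ) :
    0 ≤ ⨅ j : Fin k, |x - y j| := by
  haveI := fin_nonempty hk
  exact le_ciInf fun j => abs_nonneg _

lemma fmin_le (hk : 1 ≤ k) (y : Fin k → ℝ) (x : ℝ) (j : Fin k) :
    (⨅ j : Fin k, |x - y j|) ≤ |x - y j| := by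
  haveI := fin_nonempty hk
  exact ciInf_le ⟨0, fun a ⟨i, hi⟩ => hi ▸ abs_nonneg _⟩ j

lemma fmin_attained (hk : 1 ≤ k) (y : Fin k → ℝ) (x : ℝ) :
    ∃ j : Fin k, |x - y j| = ⨅ j : Fin k, |x - y j| := by
  haveI := fin_nonempty hk
  exact exists_eq_ciInf_of_finite

lemma meas_le_bound (hk : 1 ≤ k) (y : Fin k → ℝ) {t : ℝ} (ht : 0 ≤ t) :
    1 - 2 * k * t ≤
      ((volume.restrict (Set.Icc (0:ℝ) 1)) {x | t ≤ ⨅ j : Fin k, |x - y j|}).toReal := by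
  set μ := volume.restrict (Set.Icc (0:ℝ) 1) with hμ
  haveI : IsProbabilityMeasure μ := ⟨by simp [hμ, Real.volume_Icc]⟩
  set S := {x : ℝ | t ≤ ⨅ j : Fin k, |x - y j|} with hS
  have hmeasset : MeasurableSet S :=
    measurableSet_le measurable_const (continuous_fmin hk y).measurable
  have hsub : Sᶜ ⊆ ⋃ j, Set.Icc (y j - t) (y j + t) := by
    intro x hx
    simp only [hS, Set.mem_compl_iff, Set.mem_setOf_eq, not_le] at hx
    obtain ⟨j, hj⟩ := fmin_attained hk y x
    refine Set.mem_iUnion.2 ⟨j, ?_⟩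
    have h2 : |x - y j| ≤ t := by rw [hj]; exact hx.le
    rw [abs_le] at h2
    constructor <;> linarith [h2.1, h2.2]
  have hcb : μ Sᶜ ≤ ENNReal.ofReal (2 * k * t) := by
    calc μ Sᶜ ≤ μ (⋃ j, Set.Icc (y j - t) (y j + t)) := measure_mono hsub
    _ ≤ volume (⋃ j, Set.Icc (y j - t) (y j + t)) := Measure.restrict_le_self _
    _ ≤ ∑ j : Fin k, volume (Set.Icc (y j - t) (y j + t)) := measure_iUnion_fintype_le _ _
    _ = ∑ j : Fin k, ENNReal.ofReal (2 * t) := by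
        refine Finset.sum_congr rfl fun j _ => ?_
        rw [Real.volume_Icc]; ring_nf
    _ = (k : ℝ≥0∞) * ENNReal.ofReal (2 * t) := by
        rw [Finset.sum_const, Finset.card_univ, Fintype.card_fin, nsmul_eq_mul]
    _ = ENNReal.ofReal (2 * k * t) := by
        rw [← ENNReal.ofReal_natCast k, ← ENNReal.ofReal_mul (by positivity)]
        ring_nf
  have hadd : μ S + μ Sᶜ = 1 := by
    rw [measure_add_measure_compl hmeasset]; exact measure_univ
  have h1 : (μ S).toReal + (μ Sᶜ).toReal = 1 := by
    rw [← ENNReal.toReal_add (measure_ne_top _ _) (measure_ne_top _ _), hadd]; simp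
  have h2 : (μ Sᶜ).toReal ≤ 2 * k * t := by
    have h : (0:ℝ) ≤ 2 * k * t := by positivity
    exact ((ENNReal.toReal_le_toReal (measure_ne_top _ _) ENNReal.ofReal_ne_top).mpr hcb).trans
      (by rw [ENNReal.toReal_ofReal h])
  linarith [ENNReal.toReal_nonneg (a := μ Sᶜ)]

lemma lemA (hk : 1 ≤ k) (y : Fin k → ℝ) :
    1 / (4 * (k:ℝ)) ≤ ∫ x in Set.Icc (0:ℝ) 1, ⨅ j : Fin k, |x - y j| := by
  haveI := fin_nonempty hk
  have hkpos : (0:ℝ) < k := by exact_mod_cast hk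
  set f := fun x : ℝ => ⨅ j : Fin k, |x - y j| with hf
  set μ := volume.restrict (Set.Icc (0:ℝ) 1) with hμ
  haveI : IsProbabilityMeasure μ := ⟨by simp [hμ, Real.volume_Icc]⟩
  set M := max (1 / (2*(k:ℝ))) (|y ⟨0, hk⟩| + 1) with hM
  have hbdd : ∀ᵐ x ∂μ, f x ≤ M := by
    filter_upwards [ae_restrict_mem measurableSet_Icc] with x hx
    have h1 := fmin_le hk y x ⟨0,hk⟩
    rw [Set.mem_Icc] at hx
    have h2 : |x - y ⟨0,hk⟩| ≤ |y ⟨0,hk⟩| + 1 := by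
      calc |x - y ⟨0,hk⟩| ≤ |x| + |y ⟨0,hk⟩| := abs_sub _ _
      _ ≤ |y ⟨0,hk⟩| + 1 := by rw [abs_of_nonneg hx.1]; linarith [hx.2]
    exact (h1.trans h2).trans (le_max_right _ _)
  have hint : Integrable f μ := (continuous_fmin hk y).integrableOn_Icc
  have key := hint.integral_eq_integral_Ioc_meas_le
    (Eventually.of_forall (fmin_nonneg hk y)) hbdd
  rw [show (∫ x in Set.Icc (0:ℝ) 1, ⨅ j : Fin k, |x - y j|) = ∫ x, f x ∂μ from rfl, key]
  set c := 1 / (2*(k:ℝ)) with hc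
  have hcpos : 0 < c := by positivity
  have hcM : c ≤ M := le_max_left _ _
  have anti : Antitone fun t : ℝ => μ {a | t ≤ f a} :=
    fun s t hst => measure_mono (fun a ha => le_trans hst ha)
  have gmeas : Measurable fun t : ℝ => (μ {a | t ≤ f a}).toReal :=
    (anti.measurable).ennreal_toReal
  have gint : IntegrableOn (fun t => (μ {a | t ≤ f a}).toReal) (Set.Ioc 0 M) volume := by
    refine Integrable.mono' (integrable_const 1) gmeas.aestronglyMeasurable ?_
    filter_upwards with t
    rw [Real.norm_eq_abs, abs_of_nonneg ENNReal.toReal_nonneg]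
    exact ENNReal.toReal_le_of_le_ofReal zero_le_one (by simpa using prob_le_one)
  calc 1 / (4*(k:ℝ)) = ∫ t in Set.Ioc 0 c, (1 - 2*(k:ℝ)*t) := by
        rw [← intervalIntegral.integral_of_le hcpos.le]
        have hii : IntervalIntegrable (fun t : ℝ => 2*(k:ℝ)*t) volume 0 c :=
          (by fun_prop : Continuous fun t : ℝ => 2*(k:ℝ)*t).intervalIntegrable _ _
        rw [intervalIntegral.integral_sub intervalIntegrable_const hii]
        rw [intervalIntegral.integral_const_mul, integral_id,
          intervalIntegral.integral_const]
        simp only [hc, smul_eq_mul, mul_one, sub_zero]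
        field_simp
        ring
  _ ≤ ∫ t in Set.Ioc 0 c, (μ {a | t ≤ f a}).toReal := by
        apply setIntegral_mono_on
        · exact (by fun_prop : Continuous fun t : ℝ => 1 - 2*(k:ℝ)*t).integrableOn_Ioc
        · exact gint.mono_set (Set.Ioc_subset_Ioc_right hcM)
        · exact measurableSet_Ioc
        · intro t ht; exact meas_le_bound hk y ht.1.le
  _ ≤ ∫ t in Set.Ioc 0 M, (μ {a | t ≤ f a}).toReal := by
        refine setIntegral_mono_set gint ?_
          (HasSubset.Subset.eventuallyLE (Set.Ioc_subset_Ioc_right hcM))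
        filter_upwards with t using ENNReal.toReal_nonneg

lemma integral_abs_sym {h : ℝ} (hh : 0 ≤ h) : ∫ x in (-h)..h, |x| = h^2 := by
  rw [← intervalIntegral.integral_add_adjacent_intervals (a := -h) (b := 0) (c := h)
    (continuous_abs.intervalIntegrable _ _) (continuous_abs.intervalIntegrable _ _)]
  have h1 : ∫ x in (-h)..(0:ℝ), |x| = ∫ x in (-h)..(0:ℝ), -x := by
    apply intervalIntegral.integral_congr
    intro x hx
    rw [Set.uIcc_of_le (by linarith : -h ≤ 0)] at hx
    exact abs_of_nonpos hx.2
  have h2 : ∫ x in (0:ℝ)..h, |x| = ∫ x in (0:ℝ)..h, x := by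
    apply intervalIntegral.integral_congr
    intro x hx
    rw [Set.uIcc_of_le hh] at hx
    exact abs_of_nonneg hx.1
  rw [h1, h2, intervalIntegral.integral_neg, integral_id, integral_id]
  ring

lemma cell_integral (hk : 1 ≤ k) (i : ℕ) :
    ∫ x in ((i:ℝ)/k)..(((i:ℝ)+1)/k), |x - (2*(i:ℝ)+1)/(2*(k:ℝ))| = 1/(4*(k:ℝ)^2) := by
  have hkpos : (0:ℝ) < k := by exact_mod_cast hk
  rw [intervalIntegral.integral_comp_sub_right (fun x => |x|) ((2*(i:ℝ)+1)/(2*(k:ℝ)))]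
  have e1 : (i:ℝ)/k - (2*(i:ℝ)+1)/(2*(k:ℝ)) = -(1/(2*(k:ℝ))) := by field_simp; ring
  have e2 : ((i:ℝ)+1)/k - (2*(i:ℝ)+1)/(2*(k:ℝ)) = 1/(2*(k:ℝ)) := by field_simp; ring
  rw [e1, e2, integral_abs_sym (by positivity)]
  field_simp
  ring

lemma cell_eq (hk : 1 ≤ k) (i : Fin k) {x : ℝ}
    (hx1 : ((i:ℕ):ℝ)/k ≤ x) (hx2 : x ≤ (((i:ℕ):ℝ)+1)/k) :
    (⨅ j : Fin k, |x - (2*((j:ℕ):ℝ)+1)/(2*(k:ℝ))|) = |x - (2*((i:ℕ):ℝ)+1)/(2*(k:ℝ))| := by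
  haveI := fin_nonempty hk
  have hkpos : (0:ℝ) < k := by exact_mod_cast hk
  set d : ℝ := 1/(2*(k:ℝ)) with hdd
  have hdpos : 0 < d := by positivity
  have hcj : ∀ j : Fin k, (2*((j:ℕ):ℝ)+1)/(2*(k:ℝ)) = (2*((j:ℕ):ℝ)+1) * d := by
    intro j; rw [hdd]; field_simp
  have hik : ((i:ℕ):ℝ)/k = 2*((i:ℕ):ℝ)*d := by rw [hdd]; field_simp
  have hik1 : (((i:ℕ):ℝ)+1)/k = (2*((i:ℕ):ℝ)+2)*d := by rw [hdd]; field_simp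
  rw [hik] at hx1; rw [hik1] at hx2
  refine le_antisymm (fmin_le hk _ x i) (le_ciInf fun j => ?_)
  rw [hcj i, hcj j]
  have hii : |x - (2*((i:ℕ):ℝ)+1)*d| ≤ d := by
    rw [abs_le]; constructor <;> nlinarith
  rcases lt_trichotomy ((j:ℕ)) ((i:ℕ)) with hji | hji | hji
  · have hji' : ((j:ℕ):ℝ) + 1 ≤ ((i:ℕ):ℝ) := by exact_mod_cast hji
    have hgap : d ≤ x - (2*((j:ℕ):ℝ)+1)*d := by nlinarith
    exact hii.trans (hgap.trans (le_abs_self _))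
  · have : j = i := Fin.ext hji
    rw [this]
  · have hji' : ((i:ℕ):ℝ) + 1 ≤ ((j:ℕ):ℝ) := by exact_mod_cast hji
    have hgap : d ≤ (2*((j:ℕ):ℝ)+1)*d - x := by nlinarith
    exact hii.trans (hgap.trans ((le_abs_self _).trans_eq (abs_sub_comm _ _)))

lemma lemB (hk : 1 ≤ k) :
    (∫ x in Set.Icc (0:ℝ) 1, ⨅ j : Fin k, |x - (2*((j:ℕ):ℝ)+1)/(2*(k:ℝ))|) = 1/(4*(k:ℝ)) := by
  have hkpos : (0:ℝ) < k := by exact_mod_cast hk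
  set F := fun x : ℝ => ⨅ j : Fin k, |x - (2*((j:ℕ):ℝ)+1)/(2*(k:ℝ))| with hF
  have hsum := intervalIntegral.sum_integral_adjacent_intervals
    (a := fun i : ℕ => (i:ℝ)/k) (μ := volume) (n := k) (f := F)
    (fun i hi => (continuous_fmin hk _).intervalIntegrable _ _)
  simp only [Nat.cast_zero, zero_div, div_self hkpos.ne'] at hsum
  have hIcc : (∫ x in Set.Icc (0:ℝ) 1, F x) = ∫ x in (0:ℝ)..1, F x := by
    rw [MeasureTheory.integral_Icc_eq_integral_Ioc, intervalIntegral.integral_of_le zero_le_one]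
  rw [hIcc, ← hsum]
  have heach : ∀ i ∈ Finset.range k,
      (∫ x in ((i:ℝ)/k)..(((i+1:ℕ):ℝ)/k), F x) = 1/(4*(k:ℝ)^2) := by
    intro i hi
    rw [Finset.mem_range] at hi
    have hcast : ((i+1:ℕ):ℝ) = (i:ℝ)+1 := by push_cast; ring
    rw [hcast]
    have hmono : (i:ℝ)/k ≤ ((i:ℝ)+1)/k := (div_le_div_iff_of_pos_right hkpos).mpr (by linarith)
    rw [intervalIntegral.integral_congr (g := fun x => |x - (2*(i:ℝ)+1)/(2*(k:ℝ))|) ?_]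
    · exact cell_integral hk i
    · intro x hx
      rw [Set.uIcc_of_le hmono, Set.mem_Icc] at hx
      exact cell_eq hk ⟨i, hi⟩ hx.1 hx.2
  rw [Finset.sum_congr rfl heach, Finset.sum_const, Finset.card_range, nsmul_eq_mul]
  field_simp

def cellI (k : ℕ) (i : Fin k) : Set ℝ := Set.Ioc (((i:ℕ):ℝ)/k) ((((i:ℕ):ℝ)+1)/k)

lemma cellI_union (hk : 1 ≤ k) : ⋃ i : Fin k, cellI k i = Set.Ioc 0 1 := by
  have hkpos : (0:ℝ) < k := by exact_mod_cast hk
  ext x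
  simp only [Set.mem_iUnion, cellI, Set.mem_Ioc]
  constructor
  · rintro ⟨i, h1, h2⟩
    have hi1 : ((i:ℕ):ℝ) + 1 ≤ k := by exact_mod_cast i.isLt
    constructor
    · have : (0:ℝ) ≤ ((i:ℕ):ℝ)/k := by positivity
      linarith
    · calc x ≤ (((i:ℕ):ℝ)+1)/k := h2
        _ ≤ 1 := by rw [div_le_one hkpos]; exact hi1
  · rintro ⟨hx0, hx1⟩
    have hxk : 0 < x * k := by positivity
    set n := ⌈x * k⌉₊ with hn
    have hn1 : 1 ≤ n := Nat.one_le_ceil_iff.mpr hxk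
    have hnk : n ≤ k := Nat.ceil_le.mpr (by nlinarith)
    have hle : x * k ≤ n := Nat.le_ceil _
    have hlt : (n:ℝ) < x * k + 1 := Nat.ceil_lt_add_one hxk.le
    refine ⟨⟨n-1, by omega⟩, ?_, ?_⟩
    · show (((n-1 : ℕ)):ℝ)/k < x
      rw [div_lt_iff₀ hkpos]
      have : ((n-1:ℕ):ℝ) = (n:ℝ) - 1 := by
        rw [Nat.cast_sub hn1]; norm_num
      rw [this]; linarith
    · show x ≤ (((n-1:ℕ):ℝ)+1)/k
      rw [le_div_iff₀ hkpos]
      have : ((n-1:ℕ):ℝ) = (n:ℝ) - 1 := by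
        rw [Nat.cast_sub hn1]; norm_num
      rw [this]; linarith

lemma cellI_disjoint (hk : 1 ≤ k) : Pairwise (Function.onFun Disjoint (cellI k)) := by
  have hkpos : (0:ℝ) < k := by exact_mod_cast hk
  intro i j hij
  have : (i:ℕ) ≠ (j:ℕ) := fun h => hij (Fin.ext h)
  unfold Function.onFun cellI
  rw [Set.Ioc_disjoint_Ioc]
  rcases lt_or_gt_of_ne this with h | h
  · have : ((i:ℕ):ℝ) + 1 ≤ ((j:ℕ):ℝ) := by exact_mod_cast h
    calc min ((((i:ℕ):ℝ)+1)/k) ((((j:ℕ):ℝ)+1)/k) ≤ (((i:ℕ):ℝ)+1)/k := min_le_left _ _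
      _ ≤ ((j:ℕ):ℝ)/k := (div_le_div_iff_of_pos_right hkpos).mpr this
      _ ≤ max _ _ := le_max_right _ _
  · have : ((j:ℕ):ℝ) + 1 ≤ ((i:ℕ):ℝ) := by exact_mod_cast h
    calc min ((((i:ℕ):ℝ)+1)/k) ((((j:ℕ):ℝ)+1)/k) ≤ (((j:ℕ):ℝ)+1)/k := min_le_right _ _
      _ ≤ ((i:ℕ):ℝ)/k := (div_le_div_iff_of_pos_right hkpos).mpr this
      _ ≤ max _ _ := le_max_left _ _

lemma cellI_volume (hk : 1 ≤ k) (i : Fin k) : volume (cellI k i) = (k : ℝ≥0∞)⁻¹ := by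
  have hkpos : (0:ℝ) < k := by exact_mod_cast hk
  rw [cellI, Real.volume_Ioc]
  have : (((i:ℕ):ℝ)+1)/k - ((i:ℕ):ℝ)/k = (k:ℝ)⁻¹ := by field_simp; ring
  rw [this, ← ENNReal.ofReal_natCast k, ← ENNReal.ofReal_inv_of_pos hkpos]

lemma restrict_eq_sum (hk : 1 ≤ k) :
    volume.restrict (Set.Icc (0:ℝ) 1) =
      Measure.sum (fun i : Fin k => volume.restrict (cellI k i)) := by
  rw [Measure.restrict_congr_set Ioc_ae_eq_Icc.symm, ← cellI_union hk,
    Measure.restrict_iUnion (cellI_disjoint hk) (fun i => measurableSet_Ioc)]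

noncomputable def cpt (k : ℕ) (j : Fin k) : ℝ := (2 * (j : ℝ) + 1) / (2 * (k : ℝ))

noncomputable def nuStar (k : ℕ) : Measure ℝ :=
  ∑ j : Fin k, ((k : ℝ≥0∞))⁻¹ • Measure.dirac (cpt k j)

noncomputable def piStar (k : ℕ) : Measure (ℝ × ℝ) :=
  Measure.sum (fun i : Fin k => (volume.restrict (cellI k i)).map (fun x => (x, cpt k i)))

lemma cpt_mem (hk : 1 ≤ k) (j : Fin k) : cpt k j ∈ Set.Icc (0:ℝ) 1 := by
  have hkpos : (0:ℝ) < k := by exact_mod_cast hk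
  have hj : ((j:ℕ):ℝ) + 1 ≤ k := by exact_mod_cast j.isLt
  constructor
  · rw [cpt]; positivity
  · rw [cpt, div_le_one (by positivity)]; linarith

lemma piStar_fst (hk : 1 ≤ k) :
    (piStar k).map Prod.fst = volume.restrict (Set.Icc (0:ℝ) 1) := by
  rw [piStar, Measure.map_sum measurable_fst.aemeasurable]
  have h : ∀ i : Fin k,
      ((volume.restrict (cellI k i)).map (fun x => (x, cpt k i))).map Prod.fst
        = volume.restrict (cellI k i) := by
    intro i
    have hm : Measurable fun x : ℝ => (x, cpt k i) := measurable_id.prodMk measurable_const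
    rw [Measure.map_map measurable_fst hm]
    have : (Prod.fst ∘ fun x : ℝ => (x, cpt k i)) = id := rfl
    rw [this, Measure.map_id]
  simp_rw [h]
  exact (restrict_eq_sum hk).symm

lemma piStar_snd (hk : 1 ≤ k) : (piStar k).map Prod.snd = nuStar k := by
  rw [piStar, Measure.map_sum measurable_snd.aemeasurable]
  have h : ∀ i : Fin k,
      ((volume.restrict (cellI k i)).map (fun x => (x, cpt k i))).map Prod.snd
        = ((k : ℝ≥0∞))⁻¹ • Measure.dirac (cpt k i) := by
    intro i
    have hm : Measurable fun x : ℝ => (x, cpt k i) := measurable_id.prodMk measurable_const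
    rw [Measure.map_map measurable_snd hm]
    have : (Prod.snd ∘ fun x : ℝ => (x, cpt k i)) = fun _ => cpt k i := rfl
    rw [this, Measure.map_const, Measure.restrict_apply_univ, cellI_volume hk]
  simp_rw [h]
  rw [nuStar, Measure.sum_fintype]

lemma piStar_prob (hk : 1 ≤ k) : IsProbabilityMeasure (piStar k) := by
  constructor
  rw [piStar, Measure.sum_apply _ MeasurableSet.univ]
  have h : ∀ i : Fin k,
      ((volume.restrict (cellI k i)).map (fun x => (x, cpt k i))) Set.univ
        = (k : ℝ≥0∞)⁻¹ := by
    intro i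
    have hm : Measurable fun x : ℝ => (x, cpt k i) := measurable_id.prodMk measurable_const
    rw [Measure.map_apply hm MeasurableSet.univ]
    simp [cellI_volume hk]
  simp_rw [h, tsum_fintype]
  rw [Finset.sum_const, Finset.card_univ, Fintype.card_fin, nsmul_eq_mul]
  exact ENNReal.mul_inv_cancel (Nat.cast_ne_zero.mpr (by omega)) (ENNReal.natCast_ne_top k)

lemma piStar_cost (hk : 1 ≤ k) :
    ∫ p, |p.1 - p.2| ∂(piStar k) = 1 / (4 * (k:ℝ)) := by
  have hkpos : (0:ℝ) < k := by exact_mod_cast hk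
  have hmeas : ∀ i : Fin k, Measurable fun x : ℝ => (x, cpt k i) :=
    fun i => measurable_id.prodMk measurable_const
  have hcont : Continuous fun p : ℝ × ℝ => |p.1 - p.2| := by fun_prop
  have hint : ∀ i : Fin k, Integrable (fun p : ℝ × ℝ => |p.1 - p.2|)
      ((volume.restrict (cellI k i)).map (fun x => (x, cpt k i))) := by
    intro i
    rw [integrable_map_measure hcont.aestronglyMeasurable (hmeas i).aemeasurable]
    have h : ((fun p : ℝ × ℝ => |p.1 - p.2|) ∘ fun x => (x, cpt k i))
        = fun x => |x - cpt k i| := rfl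
    rw [h]
    exact (by fun_prop : Continuous fun x : ℝ => |x - cpt k i|).integrableOn_Ioc
  rw [piStar, Measure.sum_fintype, integral_finset_sum_measure (fun i _ => hint i)]
  have heach : ∀ i : Fin k,
      (∫ p, |p.1 - p.2| ∂((volume.restrict (cellI k i)).map (fun x => (x, cpt k i))))
        = 1/(4*(k:ℝ)^2) := by
    intro i
    rw [integral_map (hmeas i).aemeasurable hcont.aestronglyMeasurable]
    have hmono : ((i:ℕ):ℝ)/k ≤ (((i:ℕ):ℝ)+1)/k :=
      (div_le_div_iff_of_pos_right hkpos).mpr (by linarith)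
    show (∫ x in cellI k i, |x - cpt k i|) = _
    rw [cellI, ← intervalIntegral.integral_of_le hmono]
    exact cell_integral hk (i:ℕ)
  rw [Finset.sum_congr rfl (fun i _ => heach i)]
  rw [Finset.sum_const, Finset.card_univ, Fintype.card_fin, nsmul_eq_mul]
  field_simp

lemma coupling_cost_lb (hk : 1 ≤ k) (y : Fin k → ℝ) (π : Measure (ℝ × ℝ))
    (hπ : IsProbabilityMeasure π)
    (h1 : π.map Prod.fst = volume.restrict (Set.Icc (0:ℝ) 1))
    {ν : Measure ℝ} (h2 : π.map Prod.snd = ν) (hν : ν ((Set.range y)ᶜ) = 0) :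
    1 / (4 * (k:ℝ)) ≤ ∫ p, |p.1 - p.2| ∂π := by
  haveI := fin_nonempty hk
  set F := fun x : ℝ => ⨅ j : Fin k, |x - y j| with hF
  have hFc : Continuous F := continuous_fmin hk y
  have hcont : Continuous fun p : ℝ × ℝ => |p.1 - p.2| := by fun_prop
  have hrange : ∀ᵐ p ∂π, p.2 ∈ Set.range y := by
    have hms : MeasurableSet ((Set.range y)ᶜ) := (Set.finite_range y).measurableSet.compl
    have h0 : π (Prod.snd ⁻¹' (Set.range y)ᶜ) = 0 := by
      rw [← Measure.map_apply measurable_snd hms, h2]; exact hν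
    rw [ae_iff]; exact h0
  have hx01 : ∀ᵐ p ∂π, p.1 ∈ Set.Icc (0:ℝ) 1 := by
    have hms : MeasurableSet ((Set.Icc (0:ℝ) 1)ᶜ) := measurableSet_Icc.compl
    have h0 : π (Prod.fst ⁻¹' (Set.Icc (0:ℝ) 1)ᶜ) = 0 := by
      rw [← Measure.map_apply measurable_fst hms, h1, Measure.restrict_apply hms]
      simp
    rw [ae_iff]; exact h0
  set My := ∑ j : Fin k, |y j| with hMy
  have hyb : ∀ j : Fin k, |y j| ≤ My :=
    fun j => Finset.single_le_sum (fun j _ => abs_nonneg (y j)) (Finset.mem_univ j)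
  have hbound : ∀ᵐ p ∂π, ‖|p.1 - p.2|‖ ≤ 1 + My := by
    filter_upwards [hrange, hx01] with p hp hp1
    obtain ⟨j, hj⟩ := hp
    rw [Real.norm_eq_abs, abs_abs]
    calc |p.1 - p.2| ≤ |p.1| + |p.2| := abs_sub _ _
      _ ≤ 1 + My := by
          rw [← hj, abs_of_nonneg hp1.1]
          exact add_le_add hp1.2 (hyb j)
  have hint1 : Integrable (fun p : ℝ × ℝ => |p.1 - p.2|) π :=
    Integrable.mono' (integrable_const (1 + My)) hcont.aestronglyMeasurable hbound
  have hbound2 : ∀ᵐ p ∂π, ‖F p.1‖ ≤ 1 + My := by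
    filter_upwards [hx01] with p hp1
    rw [Real.norm_eq_abs, abs_of_nonneg (fmin_nonneg hk y p.1)]
    calc F p.1 ≤ |p.1 - y ⟨0, hk⟩| := fmin_le hk y p.1 _
      _ ≤ |p.1| + |y ⟨0, hk⟩| := abs_sub _ _
      _ ≤ 1 + My := by
          rw [abs_of_nonneg hp1.1]
          exact add_le_add hp1.2 (hyb _)
  have hint2 : Integrable (fun p : ℝ × ℝ => F p.1) π :=
    Integrable.mono' (integrable_const (1 + My))
      (hFc.comp continuous_fst).aestronglyMeasurable hbound2
  have hle : (fun p : ℝ × ℝ => F p.1) ≤ᵐ[π] fun p => |p.1 - p.2| := by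
    filter_upwards [hrange] with p hp
    obtain ⟨j, hj⟩ := hp
    calc F p.1 ≤ |p.1 - y j| := fmin_le hk y p.1 j
      _ = |p.1 - p.2| := by rw [hj]
  calc 1/(4*(k:ℝ)) ≤ ∫ x in Set.Icc (0:ℝ) 1, F x := lemA hk y
    _ = ∫ p, F p.1 ∂π := by
        rw [← h1, integral_map measurable_fst.aemeasurable hFc.aestronglyMeasurable]
    _ ≤ ∫ p, |p.1 - p.2| ∂π := integral_mono_ae hint2 hint1 hle

lemma nuStar_prob (hk : 1 ≤ k) : IsProbabilityMeasure (nuStar k) := by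
  haveI := piStar_prob hk
  rw [← piStar_snd hk]
  exact Measure.isProbabilityMeasure_map measurable_snd.aemeasurable

lemma nuStar_mem_Pk (hk : 1 ≤ k) : nuStar k ∈ Pk k := by
  refine ⟨nuStar_prob hk, Finset.univ.image (cpt k), ?_, ?_⟩
  · exact Finset.card_image_le.trans (by simp)
  · rw [nuStar, Measure.finset_sum_apply]
    apply Finset.sum_eq_zero
    intro j _
    have hms : MeasurableSet ((↑(Finset.univ.image (cpt k)) : Set ℝ)ᶜ) :=
      (Finset.univ.image (cpt k)).measurableSet.compl
    rw [Measure.smul_apply, Measure.dirac_apply' _ hms]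
    have : cpt k j ∈ (↑(Finset.univ.image (cpt k)) : Set ℝ) := by simp
    simp [Set.indicator_of_notMem, this]

lemma exists_cover (hk : 1 ≤ k) (s : Finset ℝ) (hne : s.Nonempty) (hcard : s.card ≤ k) :
    ∃ y : Fin k → ℝ, ∀ t ∈ s, ∃ j : Fin k, y j = t := by
  obtain ⟨t0, ht0⟩ := hne
  refine ⟨fun j => s.toList.getD j t0, fun t ht => ?_⟩
  have hmem : t ∈ s.toList := Finset.mem_toList.mpr ht
  obtain ⟨i, hi, hget⟩ := List.getElem_of_mem hmem
  have hik : i < k := lt_of_lt_of_le (by simpa [Finset.length_toList] using hi) hcard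
  refine ⟨⟨i, hik⟩, ?_⟩
  show s.toList.getD i t0 = t
  rw [List.getD_eq_getElem _ _ hi, hget]

lemma W1_nuStar (hk : 1 ≤ k) :
    W1 (volume.restrict (Set.Icc (0:ℝ) 1)) (nuStar k) = 1 / (4 * (k:ℝ)) := by
  have hmem : (1 / (4 * (k:ℝ))) ∈ {c : ℝ | ∃ π : Measure (ℝ × ℝ), IsProbabilityMeasure π ∧
      π.map Prod.fst = volume.restrict (Set.Icc (0:ℝ) 1) ∧ π.map Prod.snd = nuStar k ∧
      c = ∫ p, |p.1 - p.2| ∂π} :=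
    ⟨piStar k, piStar_prob hk, piStar_fst hk, piStar_snd hk, (piStar_cost hk).symm⟩
  have hrange0 : (nuStar k) ((Set.range (cpt k))ᶜ) = 0 := by
    rw [nuStar, Measure.finset_sum_apply]
    apply Finset.sum_eq_zero
    intro j _
    have hms : MeasurableSet ((Set.range (cpt k))ᶜ) :=
      (Set.finite_range (cpt k)).measurableSet.compl
    rw [Measure.smul_apply, Measure.dirac_apply' _ hms]
    simp [Set.indicator_of_notMem, Set.mem_range]
  apply le_antisymm
  · apply csInf_le ?_ hmem
    refine ⟨0, fun c ⟨π, hπ, _, _, hc⟩ => ?_⟩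
    rw [hc]; exact integral_nonneg fun p => abs_nonneg _
  · apply le_csInf ⟨_, hmem⟩
    rintro c ⟨π, hπ, hfst, hsnd, hc⟩
    rw [hc]
    exact coupling_cost_lb hk (cpt k) π hπ hfst hsnd hrange0

lemma W1_nonneg (α β : Measure ℝ) : 0 ≤ W1 α β := by
  apply Real.sInf_nonneg
  rintro c ⟨π, -, -, -, hc⟩
  rw [hc]
  exact integral_nonneg fun p => abs_nonneg _

lemma W1_lb (hk : 1 ≤ k) {ν : Measure ℝ} (hν : ν ∈ Pk k) :
    1 / (4 * (k:ℝ)) ≤ W1 (volume.restrict (Set.Icc (0:ℝ) 1)) ν := by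
  obtain ⟨hprob, s, hcard, hs0⟩ := hν
  haveI := hprob
  haveI : IsProbabilityMeasure (volume.restrict (Set.Icc (0:ℝ) 1)) :=
    ⟨by simp [Real.volume_Icc]⟩
  have hne : s.Nonempty := by
    by_contra h
    rw [Finset.not_nonempty_iff_eq_empty] at h
    rw [h] at hs0
    simp at hs0
  obtain ⟨y, hy⟩ := exists_cover hk s hne hcard
  apply le_csInf
  · exact ⟨∫ p, |p.1 - p.2| ∂((volume.restrict (Set.Icc (0:ℝ) 1)).prod ν),
      (volume.restrict (Set.Icc (0:ℝ) 1)).prod ν, inferInstance,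
      by simp [Measure.map_fst_prod, measure_univ, one_smul],
      by simp [Measure.map_snd_prod, measure_univ, one_smul], rfl⟩
  · rintro c ⟨π, hπ, hfst, hsnd, hc⟩
    rw [hc]
    apply coupling_cost_lb hk y π hπ hfst hsnd
    apply measure_mono_null ?_ hs0
    intro x hx
    simp only [Set.mem_compl_iff] at hx ⊢
    intro hxs
    obtain ⟨j, hj⟩ := hy x hxs
    exact hx ⟨j, hj⟩

lemma projDist_eq' (hk : 1 ≤ k) :
    sInf {c : ℝ | ∃ ν ∈ Pk k, c = W1 (volume.restrict (Set.Icc (0:ℝ) 1)) ν}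
      = 1 / (4 * (k:ℝ)) := by
  apply le_antisymm
  · refine csInf_le ⟨0, ?_⟩ ⟨nuStar k, nuStar_mem_Pk hk, (W1_nuStar hk).symm⟩
    rintro c ⟨ν, hν, hc⟩
    rw [hc]
    exact W1_nonneg _ _
  · refine le_csInf ⟨W1 (volume.restrict (Set.Icc (0:ℝ) 1)) (nuStar k),
      nuStar k, nuStar_mem_Pk hk, rfl⟩ ?_
    rintro c ⟨ν, hν, hc⟩
    rw [hc]
    exact W1_lb hk hν


/-- For the uniform distribution on `[0,1]`, the optimal `k`-facility cost is
`1/(4k)`, attained at the points `(2j-1)/(2k)`; equivalently the Wasserstein projection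
distance onto `k`-point measures is `1/(4k)`, attained by the uniform measure on these points. -/
theorem stmt15 (k : ℕ) (hk : 1 ≤ k) :
    (∀ y : Fin k → ℝ,
      1 / (4 * (k : ℝ)) ≤ ∫ x in Set.Icc (0 : ℝ) 1, ⨅ j : Fin k, |x - y j|) ∧
    (∫ x in Set.Icc (0 : ℝ) 1,
        ⨅ j : Fin k, |x - (2 * (j : ℝ) + 1) / (2 * (k : ℝ))|) = 1 / (4 * (k : ℝ)) ∧
    projDist k (volume.restrict (Set.Icc (0 : ℝ) 1)) = 1 / (4 * (k : ℝ)) ∧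
    ((∑ j : Fin k,
        ((k : ℝ≥0∞))⁻¹ • Measure.dirac ((2 * (j : ℝ) + 1) / (2 * (k : ℝ)))) ∈ Pk k ∧
      W1 (volume.restrict (Set.Icc (0 : ℝ) 1))
        (∑ j : Fin k,
          ((k : ℝ≥0∞))⁻¹ • Measure.dirac ((2 * (j : ℝ) + 1) / (2 * (k : ℝ)))) =
        1 / (4 * (k : ℝ))) := by
  refine ⟨fun y => lemA hk y, lemB hk, projDist_eq' hk, nuStar_mem_Pk hk, W1_nuStar hk⟩
end

section
/- Let μ be the exponential distribution with rate 1, i.e. the measure on ℝ with density e^{−x} on [0,∞) and 0 elsewhere. Then the pair (log(3/2), log 6) minimizes the two-facility cost functional (y₁, y₂) ↦ ∫_0^∞ min(|x − y₁|, |x − y₂|) e^{−x} dx over ℝ²; the corresponding optimal percentile vector is (F_μ(log(3/2)), F_μ(log 6)) = (1/3, 5/6). -/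
open MeasureTheory Filter Topology ENNReal

/-- The exponential distribution with rate 1. -/
noncomputable def expDist : Measure ℝ :=
  volume.withDensity fun x => ENNReal.ofReal (if 0 ≤ x then Real.exp (-x) else 0)

-- auxiliary lemmas
section Aux
open NNReal Set

lemma hd1 (c : ℝ) (x : ℝ) :
    HasDerivAt (fun x => (c - x - 1) * Real.exp (-x)) (Real.exp (-x) * (x - c)) x := by
  have h1 : HasDerivAt (fun x : ℝ => c - x - 1) (-1) x := by
    simpa using ((hasDerivAt_id x).const_sub c).sub_const 1
  have h2 : HasDerivAt (fun x : ℝ => Real.exp (-x)) (-Real.exp (-x)) x := by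
    simpa [Function.comp_def] using (Real.hasDerivAt_exp (-x)).comp x (hasDerivAt_neg x)
  exact (h1.fun_mul h2).congr_deriv (by ring)

lemma hd2 (c : ℝ) (x : ℝ) :
    HasDerivAt (fun x => (x + 1 - c) * Real.exp (-x)) (Real.exp (-x) * (c - x)) x := by
  have h1 : HasDerivAt (fun x : ℝ => x + 1 - c) 1 x := by
    simpa using ((hasDerivAt_id x).add_const 1).sub_const c
  have h2 : HasDerivAt (fun x : ℝ => Real.exp (-x)) (-Real.exp (-x)) x := by
    simpa [Function.comp_def] using (Real.hasDerivAt_exp (-x)).comp x (hasDerivAt_neg x)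
  exact (h1.fun_mul h2).congr_deriv (by ring)

lemma tendsto_aux (c : ℝ) :
    Tendsto (fun x => (c - x - 1) * Real.exp (-x)) atTop (𝓝 0) := by
  have h1 : Tendsto (fun x : ℝ => x * Real.exp (-x)) atTop (𝓝 0) := by
    simpa using Real.tendsto_pow_mul_exp_neg_atTop_nhds_zero 1
  have h2 : Tendsto (fun x : ℝ => Real.exp (-x)) atTop (𝓝 0) :=
    Real.tendsto_exp_neg_atTop_nhds_zero
  have := ((h2.const_mul c).sub h1).sub h2
  simpa [sub_mul, mul_comm] using this

lemma tail_integrable (c : ℝ) :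
    IntegrableOn (fun x => Real.exp (-x) * (x - c)) (Ioi c) := by
  exact integrableOn_Ioi_deriv_of_nonneg' (fun x _ => hd1 c x)
    (fun x hx => mul_nonneg (Real.exp_pos _).le (by simp at hx; linarith))
    (tendsto_aux c)

lemma tail_integral (c : ℝ) :
    ∫ x in Ioi c, Real.exp (-x) * (x - c) = Real.exp (-c) := by
  rw [integral_Ioi_of_hasDerivAt_of_nonneg' (fun x _ => hd1 c x)
    (fun x hx => mul_nonneg (Real.exp_pos _).le (by simp at hx; linarith))
    (tendsto_aux c)]
  simp

lemma ftc1 (c a b : ℝ) : ∫ x in a..b, Real.exp (-x) * (x - c) =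
    (c - b - 1) * Real.exp (-b) - (c - a - 1) * Real.exp (-a) :=
  intervalIntegral.integral_eq_sub_of_hasDerivAt (fun x _ => hd1 c x)
    ((Continuous.mul (by fun_prop) (by fun_prop)).intervalIntegrable a b)

lemma ftc2 (c a b : ℝ) : ∫ x in a..b, Real.exp (-x) * (c - x) =
    (b + 1 - c) * Real.exp (-b) - (a + 1 - c) * Real.exp (-a) :=
  intervalIntegral.integral_eq_sub_of_hasDerivAt (fun x _ => hd2 c x)
    ((Continuous.mul (by fun_prop) (by fun_prop)).intervalIntegrable a b)

lemma expDist_integral (F : ℝ → ℝ) :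
    ∫ x, F x ∂expDist = ∫ x in Ioi 0, Real.exp (-x) * F x := by
  have hm : Measurable fun x : ℝ => Real.toNNReal (if 0 ≤ x then Real.exp (-x) else 0) := by
    apply Measurable.real_toNNReal
    exact Measurable.ite measurableSet_Ici (by fun_prop) measurable_const
  have hrw : expDist = volume.withDensity
      fun x : ℝ => ((Real.toNNReal (if 0 ≤ x then Real.exp (-x) else 0) : ℝ≥0) : ℝ≥0∞) := rfl
  rw [hrw, integral_withDensity_eq_integral_smul hm]
  have : (fun x => Real.toNNReal (if 0 ≤ x then Real.exp (-x) else 0) • F x)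
      = (Ici (0:ℝ)).indicator (fun x => Real.exp (-x) * F x) := by
    funext x
    by_cases hx : 0 ≤ x
    · simp [hx, indicator_apply, NNReal.smul_def, Real.coe_toNNReal _ (Real.exp_pos _).le]
    · simp [hx, indicator_apply, NNReal.smul_def]
  rw [this, integral_indicator measurableSet_Ici, integral_Ici_eq_integral_Ioi]

lemma cost_formula {y₁ y₂ : ℝ} (h0 : 0 ≤ y₁) (h12 : y₁ ≤ y₂) :
    ∫ x in Ioi (0:ℝ), Real.exp (-x) * min |x - y₁| |x - y₂| =
      y₁ - 1 + 2 * Real.exp (-y₁) + 2 * Real.exp (-y₂)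
        - 2 * Real.exp (-((y₁ + y₂) / 2)) := by
  set m := (y₁ + y₂) / 2 with hm
  set f : ℝ → ℝ := fun x => Real.exp (-x) * min |x - y₁| |x - y₂| with hf
  have hfc : Continuous f := by fun_prop
  have h1m : y₁ ≤ m := by rw [hm]; linarith
  have hm2 : m ≤ y₂ := by rw [hm]; linarith
  -- tail piece
  have htail_eq : EqOn f (fun x => Real.exp (-x) * (x - y₂)) (Ioi y₂) := by
    intro x hx
    simp only [mem_Ioi] at hx
    show Real.exp (-x) * min |x - y₁| |x - y₂| = Real.exp (-x) * (x - y₂)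
    have e2 : |x - y₂| = x - y₂ := abs_of_nonneg (by linarith)
    have e1 : |x - y₁| = x - y₁ := abs_of_nonneg (by linarith)
    rw [e1, e2, min_eq_right (by linarith)]
  have htail_int : IntegrableOn f (Ioi y₂) :=
    (tail_integrable y₂).congr_fun htail_eq.symm measurableSet_Ioi
  have htail : ∫ x in Ioi y₂, f x = Real.exp (-y₂) := by
    rw [setIntegral_congr_fun measurableSet_Ioi htail_eq, tail_integral]
  -- piece on Ioc 0 y₁
  have hp1 : ∫ x in Ioc 0 y₁, f x = Real.exp (-y₁) - 1 + y₁ := by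
    rw [setIntegral_congr_fun measurableSet_Ioc
      (g := fun x => Real.exp (-x) * (y₁ - x)) ?_,
      ← intervalIntegral.integral_of_le h0, ftc2]
    · simp; ring
    · intro x hx
      simp only [mem_Ioc] at hx
      show Real.exp (-x) * min |x - y₁| |x - y₂| = Real.exp (-x) * (y₁ - x)
      have e1 : |x - y₁| = y₁ - x := by rw [abs_sub_comm]; exact abs_of_nonneg (by linarith)
      have e2 : |x - y₂| = y₂ - x := by rw [abs_sub_comm]; exact abs_of_nonneg (by linarith)
      rw [e1, e2, min_eq_left (by linarith)]
  have hp2 : ∫ x in Ioc y₁ m, f x =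
      (y₁ - m - 1) * Real.exp (-m) + Real.exp (-y₁) := by
    rw [setIntegral_congr_fun measurableSet_Ioc
      (g := fun x => Real.exp (-x) * (x - y₁)) ?_,
      ← intervalIntegral.integral_of_le h1m, ftc1]
    · ring
    · intro x hx
      simp only [mem_Ioc] at hx
      show Real.exp (-x) * min |x - y₁| |x - y₂| = Real.exp (-x) * (x - y₁)
      have e1 : |x - y₁| = x - y₁ := abs_of_nonneg (by linarith)
      have e2 : |x - y₂| = y₂ - x := by rw [abs_sub_comm]; exact abs_of_nonneg (by linarith [hx.2, hm2])
      rw [e1, e2, min_eq_left (by rw [hm] at hx; linarith [hx.2])]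
  have hp3 : ∫ x in Ioc m y₂, f x =
      Real.exp (-y₂) - (m + 1 - y₂) * Real.exp (-m) := by
    rw [setIntegral_congr_fun measurableSet_Ioc
      (g := fun x => Real.exp (-x) * (y₂ - x)) ?_,
      ← intervalIntegral.integral_of_le hm2, ftc2]
    · ring
    · intro x hx
      simp only [mem_Ioc] at hx
      show Real.exp (-x) * min |x - y₁| |x - y₂| = Real.exp (-x) * (y₂ - x)
      have e1 : |x - y₁| = x - y₁ := abs_of_nonneg (by linarith [hx.1, h1m])
      have e2 : |x - y₂| = y₂ - x := by rw [abs_sub_comm]; exact abs_of_nonneg (by linarith)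
      rw [e1, e2, min_eq_right (by rw [hm] at hx; linarith [hx.1])]
  -- assemble
  have hsplit2 : ∫ x in Ioc 0 y₂, f x =
      (∫ x in Ioc 0 y₁, f x) + (∫ x in Ioc y₁ m, f x) + (∫ x in Ioc m y₂, f x) := by
    rw [← setIntegral_union (Ioc_disjoint_Ioc_of_le le_rfl) measurableSet_Ioc
        (hfc.integrableOn_Ioc) (hfc.integrableOn_Ioc),
      Ioc_union_Ioc_eq_Ioc h0 h1m,
      ← setIntegral_union (Ioc_disjoint_Ioc_of_le le_rfl) measurableSet_Ioc
        (hfc.integrableOn_Ioc) (hfc.integrableOn_Ioc),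
      Ioc_union_Ioc_eq_Ioc (le_trans h0 h1m) hm2]
  have hsplit : ∫ x in Ioi (0:ℝ), f x =
      (∫ x in Ioc 0 y₂, f x) + ∫ x in Ioi y₂, f x := by
    rw [← setIntegral_union (Ioc_disjoint_Ioi le_rfl) measurableSet_Ioi
        (hfc.integrableOn_Ioc) htail_int,
      Ioc_union_Ioi_eq_Ioi (le_trans h0 (le_trans h1m hm2))]
  rw [hsplit, hsplit2, hp1, hp2, hp3, htail]
  rw [hm]; ring

lemma key_ineq {y₁ y₂ : ℝ} (h0 : 0 ≤ y₁) (h12 : y₁ ≤ y₂) :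
    Real.log (3 / 2) ≤ y₁ - 1 + 2 * Real.exp (-y₁) + 2 * Real.exp (-y₂)
      - 2 * Real.exp (-((y₁ + y₂) / 2)) := by
  set s := Real.exp (-(y₁ / 2)) with hs
  set t := Real.exp (-(y₂ / 2)) with ht
  have hsp : 0 < s := Real.exp_pos _
  have htp : 0 < t := Real.exp_pos _
  have hts : t ≤ s := Real.exp_le_exp.mpr (by linarith)
  have h1 : Real.exp (-y₁) = s ^ 2 := by
    rw [hs, pow_two, ← Real.exp_add]; congr 1; ring
  have h2 : Real.exp (-y₂) = t ^ 2 := by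
    rw [ht, pow_two, ← Real.exp_add]; congr 1; ring
  have h3 : Real.exp (-((y₁ + y₂) / 2)) = s * t := by
    rw [hs, ht, ← Real.exp_add]; ring_nf
  have h4 : y₁ = -2 * Real.log s := by
    rw [hs, Real.log_exp]; ring
  have hlog : Real.log (3 / 2 * s ^ 2) ≤ 3 / 2 * s ^ 2 - 1 :=
    Real.log_le_sub_one_of_pos (by positivity)
  have hlogeq : Real.log (3 / 2 * s ^ 2) = Real.log (3 / 2) + 2 * Real.log s := by
    rw [Real.log_mul (by norm_num) (by positivity), Real.log_pow]; push_cast; ring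
  rw [h1, h2, h3, h4]
  nlinarith [sq_nonneg (2 * t - s)]

lemma mcdf_exp {t : ℝ} (ht : 0 ≤ t) :
    (expDist (Set.Iic t)).toReal = 1 - Real.exp (-t) := by
  rw [expDist, withDensity_apply _ measurableSet_Iic]
  have h1 : ∫⁻ x in Iic t, ENNReal.ofReal (if 0 ≤ x then Real.exp (-x) else 0) =
      ∫⁻ x in Iic t, (Ici (0:ℝ)).indicator (fun x => ENNReal.ofReal (Real.exp (-x))) x := by
    apply lintegral_congr
    intro x
    by_cases hx : 0 ≤ x <;> simp [hx, indicator_apply]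
  rw [h1, lintegral_indicator measurableSet_Ici, Measure.restrict_restrict measurableSet_Ici]
  have h2 : Ici (0:ℝ) ∩ Iic t = Icc 0 t := rfl
  rw [h2]
  have h3 : ∫⁻ x in Icc (0:ℝ) t, ENNReal.ofReal (Real.exp (-x)) =
      ENNReal.ofReal (∫ x in Icc (0:ℝ) t, Real.exp (-x)) := by
    rw [← ofReal_integral_eq_lintegral_ofReal]
    · exact (Continuous.integrableOn_Icc (by fun_prop))
    · exact Filter.Eventually.of_forall fun x => (Real.exp_pos _).le
  rw [h3, integral_Icc_eq_integral_Ioc, ← intervalIntegral.integral_of_le ht]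
  have h4 : ∫ x in (0:ℝ)..t, Real.exp (-x) = 1 - Real.exp (-t) := by
    have : ∀ x ∈ uIcc (0:ℝ) t, HasDerivAt (fun y => -Real.exp (-y)) (Real.exp (-x)) x := by
      intro x _
      have := (Real.hasDerivAt_exp (-x)).comp x (hasDerivAt_neg x)
      simpa [Function.comp_def] using this.fun_neg
    rw [intervalIntegral.integral_eq_sub_of_hasDerivAt this
      ((Continuous.intervalIntegrable (by fun_prop) _ _))]
    simp
    ring
  rw [h4, ENNReal.toReal_ofReal]
  have : Real.exp (-t) ≤ 1 := Real.exp_le_one_iff.mpr (by linarith)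
  linarith

lemma min_integrable (y₁ y₂ : ℝ) :
    IntegrableOn (fun x => Real.exp (-x) * min |x - y₁| |x - y₂|) (Ioi 0) := by
  have hexp : IntegrableOn (fun x => Real.exp (-x)) (Ioi (0:ℝ)) := by
    have := exp_neg_integrableOn_Ioi 0 (one_pos (α := ℝ))
    simpa using this
  have hg : IntegrableOn (fun x => Real.exp (-x) * (x - 0) + |y₁| * Real.exp (-x))
      (Ioi (0:ℝ)) := (tail_integrable 0).add (hexp.const_mul |y₁|)
  apply hg.integrable.mono
  · exact (Continuous.mul (by fun_prop) (by fun_prop)).aestronglyMeasurable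
  · rw [ae_restrict_iff' measurableSet_Ioi]
    filter_upwards with x hx
    simp only [mem_Ioi] at hx
    have h1 : min |x - y₁| |x - y₂| ≤ x + |y₁| := by
      calc min |x - y₁| |x - y₂| ≤ |x - y₁| := min_le_left _ _
        _ ≤ |x| + |y₁| := abs_sub _ _
        _ = x + |y₁| := by rw [abs_of_pos hx]
    calc ‖Real.exp (-x) * min |x - y₁| |x - y₂|‖
        = Real.exp (-x) * min |x - y₁| |x - y₂| := by
          rw [Real.norm_eq_abs, abs_mul, abs_of_pos (Real.exp_pos _),
            abs_of_nonneg (le_min (abs_nonneg _) (abs_nonneg _))]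
      _ ≤ Real.exp (-x) * (x + |y₁|) := mul_le_mul_of_nonneg_left h1 (Real.exp_pos _).le
      _ = Real.exp (-x) * (x - 0) + |y₁| * Real.exp (-x) := by ring
      _ ≤ ‖Real.exp (-x) * (x - 0) + |y₁| * Real.exp (-x)‖ := le_abs_self _

lemma abs_max_le (x y : ℝ) (hx : 0 < x) : |x - max y 0| ≤ |x - y| := by
  rcases le_or_gt 0 y with h | h
  · rw [max_eq_left h]
  · rw [max_eq_right h.le]
    have : |x - 0| = x := by rw [sub_zero, abs_of_pos hx]
    rw [this]
    calc x ≤ x - y := by linarith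
      _ ≤ |x - y| := le_abs_self _

lemma reduce (y₁ y₂ : ℝ) :
    ∫ x in Ioi (0:ℝ), Real.exp (-x) * min |x - max y₁ 0| |x - max y₂ 0| ≤
      ∫ x in Ioi (0:ℝ), Real.exp (-x) * min |x - y₁| |x - y₂| := by
  apply setIntegral_mono_on (min_integrable _ _) (min_integrable _ _) measurableSet_Ioi
  intro x hx
  exact mul_le_mul_of_nonneg_left
    (min_le_min (abs_max_le x y₁ hx) (abs_max_le x y₂ hx)) (Real.exp_pos _).le

end Aux

open NNReal Set in
/-- For the rate-1 exponential distribution, `(log(3/2), log 6)` minimizes the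
two-facility cost functional, and the corresponding percentile vector is `(1/3, 5/6)`. -/
theorem stmt17 :
    (∀ y₁ y₂ : ℝ,
      (∫ x, min |x - Real.log (3 / 2)| |x - Real.log 6| ∂expDist) ≤
        ∫ x, min |x - y₁| |x - y₂| ∂expDist) ∧
    mcdf expDist (Real.log (3 / 2)) = 1 / 3 ∧
    mcdf expDist (Real.log 6) = 5 / 6 := by
  have hlog0 : (0:ℝ) ≤ Real.log (3 / 2) := Real.log_nonneg (by norm_num)
  have hlog6 : (0:ℝ) ≤ Real.log 6 := Real.log_nonneg (by norm_num)
  have hlog12 : Real.log (3 / 2) ≤ Real.log 6 := by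
    apply Real.log_le_log (by norm_num) (by norm_num)
  have e32 : Real.exp (-Real.log (3 / 2)) = 2 / 3 := by
    rw [Real.exp_neg, Real.exp_log (by norm_num)]; norm_num
  have e6 : Real.exp (-Real.log 6) = 1 / 6 := by
    rw [Real.exp_neg, Real.exp_log (by norm_num)]; norm_num
  have h9 : Real.log (3 / 2) + Real.log 6 = 2 * Real.log 3 := by
    rw [← Real.log_mul (by norm_num) (by norm_num),
      show (3 / 2 * 6 : ℝ) = 3 ^ 2 by norm_num, Real.log_pow]
    push_cast; ring
  have e3 : Real.exp (-((Real.log (3 / 2) + Real.log 6) / 2)) = 1 / 3 := by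
    rw [show (Real.log (3 / 2) + Real.log 6) / 2 = Real.log 3 by rw [h9]; ring,
      Real.exp_neg, Real.exp_log (by norm_num)]
    norm_num
  have hval : (∫ x, min |x - Real.log (3 / 2)| |x - Real.log 6| ∂expDist)
      = Real.log (3 / 2) := by
    rw [expDist_integral, cost_formula hlog0 hlog12, e32, e6, e3]; ring
  refine ⟨?_, ?_, ?_⟩
  · intro y₁ y₂
    rw [hval, expDist_integral]
    set u := max y₁ 0 with hu
    set v := max y₂ 0 with hv
    have h0' : (0:ℝ) ≤ min u v := le_min (le_max_right y₁ 0) (le_max_right y₂ 0)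
    have hswap : (∫ x in Ioi (0:ℝ), Real.exp (-x) * min |x - min u v| |x - max u v|)
        = ∫ x in Ioi (0:ℝ), Real.exp (-x) * min |x - u| |x - v| := by
      rcases le_total u v with h | h
      · rw [min_eq_left h, max_eq_right h]
      · rw [min_eq_right h, max_eq_left h]
        refine setIntegral_congr_fun measurableSet_Ioi fun x _ => ?_
        rw [min_comm]
    calc Real.log (3 / 2)
        ≤ min u v - 1 + 2 * Real.exp (-(min u v)) + 2 * Real.exp (-(max u v))
          - 2 * Real.exp (-((min u v + max u v) / 2)) := key_ineq h0' (min_le_max)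
      _ = ∫ x in Ioi (0:ℝ), Real.exp (-x) * min |x - min u v| |x - max u v| :=
          (cost_formula h0' min_le_max).symm
      _ = ∫ x in Ioi (0:ℝ), Real.exp (-x) * min |x - u| |x - v| := hswap
      _ ≤ ∫ x in Ioi (0:ℝ), Real.exp (-x) * min |x - y₁| |x - y₂| := reduce y₁ y₂
  · show (expDist (Set.Iic (Real.log (3 / 2)))).toReal = 1 / 3
    rw [mcdf_exp hlog0, e32]; norm_num
  · show (expDist (Set.Iic (Real.log 6))).toReal = 5 / 6
    rw [mcdf_exp hlog6, e6]; norm_num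
end
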